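/- arXiv:1902.07183 — 2 statements merged into one kernel-verified Lean document; each statement's English description precedes it below -/
import Mathlib

section
/- Let N be a lattice with dual M and A := ℤ[N]⊗_ℤΛ^* M, with shifted grading |z^n⊗α| := deg α − 1 and k-brackets l_k(ζ_1,…,ζ_k) := ε(ζ_1,…,ζ_k)·l_1(ζ_1⋯ζ_k), where ε(ζ_1,…,ζ_k) := (−1)^{Σ_{i=1}^k (k−i)|ζ_i|}. Then each l_k is graded skew-symmetric with respect to the shifted grading: for every permutation σ ∈ S_k and all homogeneous ζ_1,…,ζ_k ∈ A, l_k(ζ_{σ(1)},…,ζ_{σ(k)}) = χ(σ; ζ_1,…,ζ_k)·l_k(ζ_1,…,ζ_k), where χ(σ; ζ_1,…,ζ_k) := sgn(σ)·∏(−1)^{|ζ_i||ζ_j|}, the product taken over all pairs i < j that appear in reversed order in the sequence (ζ_{σ(1)},…,ζ_{σ(k)}) (the graded signature, or Koszul sign). -/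
/-!
Writing `ζ_t = z^{n_t} ⊗ α_t`, the monomial parts commute, so both sides are multiples of
`l_1(z^{Σ n} ⊗ α_1 ⋯ α_k)`, and it suffices to compare signs. Reordering the product of the
homogeneous `α_t` costs the Koszul sign `κ(σ) = ∏ (-1)^{d_i d_j}` over the inversions of `σ`, so
the claim reduces to the sign identity `ε(σ·d) κ(σ) = χ(σ) ε(d)`. Both this identity and the
reordering are proved by induction along adjacent transpositions: composing `σ` with one of them
toggles exactly one inversion, and with `x, y` the degrees swapped, each side of the identity
changes by the same factor since `(-1)^{x+y} (-1)^{xy} = -(-1)^{(x-1)(y-1)}`.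
-/

set_option synthInstance.maxHeartbeats 1000000
set_option maxHeartbeats 1000000

open Module Finset

/-- Contraction `ι_n` on `Λ^* M`, `M := Hom(N, ℤ)`, by a lattice element `n ∈ N`. -/
noncomputable def ctr {N : Type} [AddCommGroup N] (n : N) :
    ExteriorAlgebra ℤ (Module.Dual ℤ N) →ₗ[ℤ] ExteriorAlgebra ℤ (Module.Dual ℤ N) :=
  CliffordAlgebra.contractLeft (Module.Dual.eval ℤ N n)

/-- The operator `l_1` on `A = ℤ[N] ⊗ Λ^* M`: `l_1(z^n ⊗ α) = z^n ⊗ ι_n(α)`. -/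
noncomputable def lOne {N : Type} [AddCommGroup N]
    (x : AddMonoidAlgebra (ExteriorAlgebra ℤ (Module.Dual ℤ N)) N) :
    AddMonoidAlgebra (ExteriorAlgebra ℤ (Module.Dual ℤ N)) N :=
  Finsupp.sum x.coeff fun n a => AddMonoidAlgebra.single n (ctr n a)

/-- The sign `ε(ζ_1,…,ζ_k) = (−1)^{Σᵢ (k−i)|ζᵢ|}` of a tuple of homogeneous elements with
(unshifted) degrees `d 0, …, d (k-1)` (so shifted degrees `|ζ| = d − 1`). -/
def epsSign (k : ℕ) (d : Fin k → ℕ) : ℤ :=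
  ((Int.negOnePow (∑ i : Fin k, ((k : ℤ) - 1 - (i : ℕ)) * ((d i : ℤ) - 1)) : ℤˣ) : ℤ)

/-- The graded signature (Koszul sign) `χ(σ; ζ_1,…,ζ_k)`: the product of `sgn σ` with a
factor `(−1)^{|ζᵢ||ζⱼ|}` for each pair `i < j` appearing in reversed order in
`(ζ_{σ(1)},…,ζ_{σ(k)})`, i.e. with `σ⁻¹ j < σ⁻¹ i`. -/
def chiSign (k : ℕ) (σ : Equiv.Perm (Fin k)) (d : Fin k → ℕ) : ℤ :=
  ((Equiv.Perm.sign σ : ℤˣ) : ℤ) *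
    ((Int.negOnePow (∑ p ∈ Finset.univ.filter
        (fun p : Fin k × Fin k => p.1 < p.2 ∧ σ.symm p.2 < σ.symm p.1),
      ((d p.1 : ℤ) - 1) * ((d p.2 : ℤ) - 1)) : ℤˣ) : ℤ)

open Equiv Equiv.Perm

namespace ExteriorAlgebra

variable {R M : Type*} [CommRing R] [AddCommGroup M] [Module R M]

theorem ι_mul_ιMulti_comm (m : M) {q : ℕ} (v : Fin q → M) :
    ι R m * ιMulti R q v = (-1 : ℤ) ^ q • (ιMulti R q v * ι R m) := by
  induction q with
  | zero => simp
  | succ q ih =>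
    have anticomm : ι R m * ι R (v 0) = -(ι R (v 0) * ι R m) :=
      eq_neg_of_add_eq_zero_left (ι_add_mul_swap m (v 0))
    rw [ιMulti_succ_apply, ← mul_assoc, anticomm, neg_mul, mul_assoc, ih, mul_smul_comm,
      pow_succ, mul_neg_one, neg_smul, mul_assoc]

theorem ι_mul_comm_of_mem {q : ℕ} (m : M) {y : ExteriorAlgebra R M} (hy : y ∈ ⋀[R]^q M) :
    ι R m * y = (-1 : ℤ) ^ q • (y * ι R m) := by
  rw [← ιMulti_span_fixedDegree] at hy
  induction hy using Submodule.span_induction with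
  | mem x hx => obtain ⟨v, rfl⟩ := hx; exact ι_mul_ιMulti_comm m v
  | zero => simp
  | add x y _ _ hx hy => rw [mul_add, hx, hy, add_mul, smul_add]
  | smul a x _ hx => rw [mul_smul_comm, hx, smul_comm, smul_mul_assoc]

theorem ιMulti_mul_comm_of_mem {p q : ℕ} (v : Fin p → M) {y : ExteriorAlgebra R M}
    (hy : y ∈ ⋀[R]^q M) :
    ιMulti R p v * y = (-1 : ℤ) ^ (p * q) • (y * ιMulti R p v) := by
  induction p with
  | zero => simp
  | succ p ih =>
    rw [ιMulti_succ_apply, mul_assoc, ih, mul_smul_comm, ← mul_assoc, ι_mul_comm_of_mem _ hy,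
      smul_mul_assoc, smul_smul, ← pow_add, mul_assoc, Nat.succ_mul, add_comm (p * q)]

theorem mul_comm_of_mem {p q : ℕ} {x y : ExteriorAlgebra R M} (hx : x ∈ ⋀[R]^p M)
    (hy : y ∈ ⋀[R]^q M) :
    x * y = (-1 : ℤ) ^ (p * q) • (y * x) := by
  rw [← ιMulti_span_fixedDegree] at hx
  induction hx using Submodule.span_induction with
  | mem x hx => obtain ⟨v, rfl⟩ := hx; exact ιMulti_mul_comm_of_mem v hy
  | zero => simp
  | add x₁ x₂ _ _ h₁ h₂ => rw [add_mul, h₁, h₂, mul_add, smul_add]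
  | smul a x _ hx => rw [smul_mul_assoc, hx, smul_comm, mul_smul_comm]

end ExteriorAlgebra

theorem List.prod_ofFn_comp_swap_castSucc_succ {A : Type*} [Ring A] {c : ℤ} :
    ∀ {n : ℕ} (g : Fin (n + 1) → A) (i : Fin n),
      g i.succ * g i.castSucc = c • (g i.castSucc * g i.succ) →
      (List.ofFn (g ∘ Equiv.swap i.castSucc i.succ)).prod = c • (List.ofFn g).prod
  | 0, _, i, _ => i.elim0
  | n + 1, g, i, h => by
    rw [List.ofFn_succ, List.ofFn_succ (f := g), List.prod_cons, List.prod_cons]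
    cases i using Fin.cases with
    | zero =>
      rw [List.ofFn_succ, List.ofFn_succ (f := fun j => g j.succ), List.prod_cons, List.prod_cons]
      simp only [Fin.castSucc_zero, Fin.succ_zero_eq_one] at h
      have hfix : ∀ t : Fin n, Equiv.swap (0 : Fin (n + 2)) 1 t.succ.succ = t.succ.succ :=
        fun t => swap_apply_of_ne_of_ne (Fin.succ_ne_zero _) (Fin.succ_succ_ne_one _)
      simp only [Function.comp_apply, Fin.castSucc_zero, swap_apply_left, Fin.succ_zero_eq_one,
        swap_apply_right, hfix]
      rw [← mul_assoc, ← mul_assoc, h, smul_mul_assoc]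
    | succ i =>
      have hswap : ∀ t : Fin (n + 1), Equiv.swap i.succ.castSucc i.succ.succ t.succ =
          (Equiv.swap i.castSucc i.succ t).succ := by
        intro t; rw [← Fin.succ_castSucc, Fin.succ_injective _ |>.swap_apply]
      simp only [Function.comp_apply, hswap]
      rw [swap_apply_of_ne_of_ne (Fin.castSucc_ne_zero_iff.2 (Fin.succ_ne_zero _)).symm
        (Fin.succ_ne_zero _).symm]
      have ih := List.prod_ofFn_comp_swap_castSucc_succ (fun t => g t.succ) i
        (by simpa only [Fin.succ_castSucc] using h)
      rw [Function.comp_def] at ih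
      rw [ih, mul_smul_comm]

theorem AddMonoidAlgebra.list_prod_ofFn_single {R G : Type*} [Semiring R] [AddCommMonoid G] :
    ∀ {k : ℕ} (n : Fin k → G) (a : Fin k → R),
      (List.ofFn fun t => single (n t) (a t)).prod = single (∑ t, n t) (List.ofFn a).prod
  | 0, _, _ => by simp [one_def]
  | k + 1, n, a => by
    rw [List.ofFn_succ, List.prod_cons, list_prod_ofFn_single, single_mul_single,
      List.ofFn_succ (f := a), List.prod_cons, Fin.sum_univ_succ]

namespace Equiv.Perm

theorem induction_on_mul_swap_castSucc_succ {n : ℕ} {motive : Perm (Fin (n + 1)) → Prop}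
    (one : motive 1)
    (mul_swap : ∀ σ (i : Fin n), motive σ → motive (σ * swap i.castSucc i.succ))
    (σ : Perm (Fin (n + 1))) : motive σ :=
  Submonoid.induction_of_closure_eq_top_right (mclosure_swap_castSucc_succ n) σ one
    (by rintro σ _ ⟨i, rfl⟩ h; exact mul_swap σ i h)

variable {k : ℕ}

def inversions (σ : Perm (Fin k)) : Finset (Fin k × Fin k) :=
  Finset.univ.filter fun p => p.1 < p.2 ∧ σ.symm p.2 < σ.symm p.1

@[simp]
theorem inversions_one : inversions (1 : Perm (Fin k)) = ∅ :=
  Finset.filter_eq_empty_iff.2 fun _ _ h => lt_asymm h.1 h.2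

theorem inversions_mul_swap_of_lt {n : ℕ} {σ : Perm (Fin (n + 1))} {i : Fin n}
    (h : σ i.succ < σ i.castSucc) :
    (σ * swap i.castSucc i.succ).inversions = σ.inversions.erase (σ i.succ, σ i.castSucc) := by
  ext ⟨x, y⟩
  obtain ⟨a, rfl⟩ := σ.surjective x
  obtain ⟨b, rfl⟩ := σ.surjective y
  simp only [inversions, Finset.mem_erase, Finset.mem_filter, Finset.mem_univ, true_and]
  simp only [Perm.mul_def, symm_trans_apply, symm_apply_apply, symm_swap, ne_eq, Prod.mk.injEq,
    EmbeddingLike.apply_eq_iff_eq]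
  have hi : σ i.castSucc ≠ σ i.succ := h.ne'
  rw [swap_apply_def, swap_apply_def]
  split_ifs <;> subst_vars <;>
    simp only [Fin.lt_def, Fin.ext_iff, Fin.val_castSucc, Fin.val_succ, ne_eq, and_self,
      not_true_eq_false, false_and, iff_false] at * <;>
    omega

def koszulSign (σ : Perm (Fin k)) (e : Fin k → ℤ) : ℤˣ :=
  (∑ p ∈ σ.inversions, e p.1 * e p.2).negOnePow

theorem koszulSign_mul_swap_of_lt {n : ℕ} {σ : Perm (Fin (n + 1))} {i : Fin n}
    (h : σ i.succ < σ i.castSucc) (e : Fin (n + 1) → ℤ) :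
    koszulSign (σ * swap i.castSucc i.succ) e =
      (e (σ i.castSucc) * e (σ i.succ)).negOnePow * koszulSign σ e := by
  have hmem : (σ i.succ, σ i.castSucc) ∈ σ.inversions := by simp [inversions, h]
  rw [koszulSign, koszulSign, inversions_mul_swap_of_lt h, Finset.sum_erase_eq_sub hmem,
    Int.negOnePow_sub, mul_comm (e _), mul_comm]

theorem koszulSign_mul_swap {n : ℕ} (σ : Perm (Fin (n + 1))) (i : Fin n)
    (e : Fin (n + 1) → ℤ) :
    koszulSign (σ * swap i.castSucc i.succ) e =
      (e (σ i.castSucc) * e (σ i.succ)).negOnePow * koszulSign σ e := by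
  rcases (σ.injective.ne (Fin.castSucc_lt_succ (i := i)).ne).lt_or_gt with h | h
  · have h' : (σ * swap i.castSucc i.succ) i.succ < (σ * swap i.castSucc i.succ) i.castSucc := by
      simpa using h
    have hσ := koszulSign_mul_swap_of_lt h' e
    simp only [mul_swap_mul_self, Perm.mul_apply, swap_apply_left, swap_apply_right] at hσ
    rw [hσ, ← mul_assoc, mul_comm (e _), Int.units_mul_self, one_mul]
  · exact koszulSign_mul_swap_of_lt h e

end Equiv.Perm

theorem chiSign_eq_sign_mul_koszulSign {k : ℕ} (σ : Perm (Fin k)) (d : Fin k → ℕ) :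
    chiSign k σ d = ((sign σ * koszulSign σ fun t => (d t : ℤ) - 1 : ℤˣ) : ℤ) :=
  (Units.val_mul _ _).symm

theorem chiSign_mul_swap {n : ℕ} (σ : Perm (Fin (n + 1))) (i : Fin n) (d : Fin (n + 1) → ℕ) :
    chiSign (n + 1) (σ * swap i.castSucc i.succ) d =
      -((((d (σ i.castSucc) : ℤ) - 1) * ((d (σ i.succ) : ℤ) - 1)).negOnePow : ℤ) *
        chiSign (n + 1) σ d := by
  rw [chiSign_eq_sign_mul_koszulSign, chiSign_eq_sign_mul_koszulSign, koszulSign_mul_swap,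
    Perm.sign_mul, sign_swap (Fin.castSucc_lt_succ (i := i)).ne]
  push_cast
  ring

theorem Fintype.sum_mul_comp_swap {ι R : Type*} [Fintype ι] [DecidableEq ι] [CommRing R]
    (c g : ι → R) (a b : ι) :
    ∑ t, c t * g (swap a b t) = ∑ t, c t * g t + (c a - c b) * (g b - g a) := by
  rcases eq_or_ne a b with rfl | hab
  · simp
  rw [← Equiv.sum_comp (swap a b) fun t => c t * g (swap a b t)]
  simp only [swap_apply_self]
  rw [← sub_eq_iff_eq_add', ← Finset.sum_sub_distrib, Fintype.sum_eq_add a b hab]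
  · simp only [swap_apply_left, swap_apply_right]
    ring
  · rintro t ⟨hta, htb⟩
    rw [swap_apply_of_ne_of_ne hta htb, sub_self]

theorem epsSign_comp_swap {n : ℕ} (d : Fin (n + 1) → ℕ) (i : Fin n) :
    epsSign (n + 1) (fun t => d (swap i.castSucc i.succ t)) =
      (((d i.castSucc : ℤ) + d i.succ).negOnePow : ℤ) * epsSign (n + 1) d := by
  rw [epsSign, epsSign, ← Units.val_mul, ← Int.negOnePow_add, Fintype.sum_mul_comp_swap
    (fun t : Fin (n + 1) => (n + 1 : ℕ) - 1 - ((t : ℕ) : ℤ)) fun t => (d t : ℤ) - 1]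
  congr 1
  rw [Int.negOnePow_eq_iff]
  exact ⟨-d i.castSucc, by push_cast [Fin.val_castSucc, Fin.val_succ]; ring⟩

theorem ExteriorAlgebra.list_prod_ofFn_comp_perm {R M : Type*} [CommRing R] [AddCommGroup M]
    [Module R M] {k : ℕ} (d : Fin k → ℕ) (α : Fin k → ExteriorAlgebra R M)
    (hα : ∀ t, α t ∈ ⋀[R]^(d t) M) (σ : Perm (Fin k)) :
    (List.ofFn fun t => α (σ t)).prod =
      (koszulSign σ fun t => (d t : ℤ) : ℤ) • (List.ofFn α).prod := by
  cases k with
  | zero => simp [Subsingleton.elim σ 1, koszulSign]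
  | succ n =>
    induction σ using induction_on_mul_swap_castSucc_succ with
    | one => simp [koszulSign]
    | mul_swap σ i ih =>
      have hcomm := mul_comm_of_mem (hα (σ i.succ)) (hα (σ i.castSucc))
      calc (List.ofFn fun t => α ((σ * swap i.castSucc i.succ) t)).prod
          = (List.ofFn ((fun t => α (σ t)) ∘ swap i.castSucc i.succ)).prod := rfl
        _ = (-1 : ℤ) ^ (d (σ i.succ) * d (σ i.castSucc)) • (List.ofFn fun t => α (σ t)).prod :=
          List.prod_ofFn_comp_swap_castSucc_succ _ i hcomm
        _ = _ := by
          rw [ih, smul_smul, koszulSign_mul_swap, Units.val_mul, mul_comm (d _),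
            ← Int.coe_negOnePow_natCast]
          push_cast
          rfl

theorem epsSign_comp_perm_mul_koszulSign {k : ℕ} (d : Fin k → ℕ) (σ : Perm (Fin k)) :
    epsSign k (fun t => d (σ t)) * (koszulSign σ fun t => (d t : ℤ) : ℤ) =
      chiSign k σ d * epsSign k d := by
  cases k with
  | zero => simp [Subsingleton.elim σ 1, epsSign, chiSign_eq_sign_mul_koszulSign, koszulSign]
  | succ n =>
    induction σ using induction_on_mul_swap_castSucc_succ with
    | one => simp [chiSign_eq_sign_mul_koszulSign, koszulSign]
    | mul_swap σ i ih =>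
      set x : ℤ := (d (σ i.castSucc) : ℤ)
      set y : ℤ := (d (σ i.succ) : ℤ)
      have hparity :
          ((x + y).negOnePow : ℤ) * (x * y).negOnePow = -((x - 1) * (y - 1)).negOnePow := by
        rw [← Units.val_mul, ← Units.val_neg, ← Int.negOnePow_add, ← Int.negOnePow_succ,
          Units.val_inj, Int.negOnePow_eq_iff]
        exact ⟨x + y - 1, by ring⟩
      simp only [Perm.mul_apply]
      rw [epsSign_comp_swap (fun t => d (σ t)), koszulSign_mul_swap, chiSign_mul_swap,
        Units.val_mul]
      linear_combination (((x + y).negOnePow : ℤ) * (x * y).negOnePow) * ih +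
        (chiSign (n + 1) σ d * epsSign (n + 1) d) * hparity

theorem lOne_single {N : Type} [AddCommGroup N] (m : N)
    (a : ExteriorAlgebra ℤ (Module.Dual ℤ N)) :
    lOne (AddMonoidAlgebra.single m a) = AddMonoidAlgebra.single m (ctr m a) := by
  rw [lOne, AddMonoidAlgebra.coeff_single]
  exact Finsupp.sum_single_index (by rw [map_zero]; simp)

theorem lk_graded_skew_general (N : Type) [AddCommGroup N]
    (k : ℕ) (σ : Equiv.Perm (Fin k))
    (n : Fin k → N) (d : Fin k → ℕ)
    (α : Fin k → ExteriorAlgebra ℤ (Module.Dual ℤ N))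
    (hα : ∀ t, α t ∈ ⋀[ℤ]^(d t) (Module.Dual ℤ N)) :
    epsSign k (fun t => d (σ t)) •
      lOne ((List.ofFn fun t =>
        AddMonoidAlgebra.single (n (σ t)) (α (σ t))).prod) =
    chiSign k σ d •
      (epsSign k d • lOne ((List.ofFn fun t =>
        AddMonoidAlgebra.single (n t) (α t)).prod)) := by
  rw [AddMonoidAlgebra.list_prod_ofFn_single, AddMonoidAlgebra.list_prod_ofFn_single,
    Equiv.sum_comp σ n, ExteriorAlgebra.list_prod_ofFn_comp_perm d α hα σ, lOne_single,
    lOne_single, map_zsmul, ← AddMonoidAlgebra.smul_single, smul_smul, smul_smul,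
    epsSign_comp_perm_mul_koszulSign]

/-- **Graded skew-symmetry of the brackets `l_k`** (equation (GradedSkew)).
With `l_k(ζ_1,…,ζ_k) := ε(ζ_1,…,ζ_k) l_1(ζ_1⋯ζ_k)` on homogeneous elements
`ζ_t = z^{n t} ⊗ α t` (`α t ∈ Λ^{d t} M`), for every permutation `σ`:
`l_k(ζ_{σ(1)},…,ζ_{σ(k)}) = χ(σ; ζ_1,…,ζ_k) l_k(ζ_1,…,ζ_k)`. -/
theorem lk_graded_skew (N : Type) [AddCommGroup N] [Module.Free ℤ N] [Module.Finite ℤ N]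
    (k : ℕ) (σ : Equiv.Perm (Fin k))
    (n : Fin k → N) (d : Fin k → ℕ)
    (α : Fin k → ExteriorAlgebra ℤ (Module.Dual ℤ N))
    (hα : ∀ t, α t ∈ ⋀[ℤ]^(d t) (Module.Dual ℤ N)) :
    epsSign k (fun t => d (σ t)) •
      lOne ((List.ofFn fun t =>
        AddMonoidAlgebra.single (n (σ t)) (α (σ t))).prod) =
    chiSign k σ d •
      (epsSign k d • lOne ((List.ofFn fun t =>
        AddMonoidAlgebra.single (n t) (α t)).prod)) :=
  lk_graded_skew_general N k σ n d α hα
end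

section
/- Let N be a lattice with dual M. Fix k ≥ 1, elements n_1,…,n_k ∈ N, and homogeneous elements α_1,…,α_k ∈ Λ^* M; set n := n_1 + ⋯ + n_k. Fix 1 ≤ i ≤ k and j := k + 1 − i, and for an (i,j)-unshuffle σ set n_σ := n_{σ(1)} + ⋯ + n_{σ(i)}. Then Σ_{σ∈UnShuff(i,j)} Σ_{ℓ=1}^{i} (−1)^{deg α_1 + ⋯ + deg α_{σ(ℓ)−1}} · α_1∧⋯∧ι_{n_σ}(α_{σ(ℓ)})∧⋯∧α_k (where the contraction ι_{n_σ} replaces the factor in position σ(ℓ)) equals C(k−2, i−2)·ι_n(α_1∧⋯∧α_k) + ( C(k−1, i−1) − C(k−2, i−2) )·Σ_{ℓ=1}^{k} (−1)^{deg α_1 + ⋯ + deg α_{ℓ−1}}·α_1∧⋯∧ι_{n_ℓ}(α_ℓ)∧⋯∧α_k, where C(·,·) denotes the binomial coefficient, with C(a,b) := 0 for b < 0 or b > a. -/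
/-! Expanding `ι_{n_σ} = ∑_{t ≤ i} ι_{n_{σ(t)}}`, the left-hand side becomes a sum of the terms
`T(s, m) = ± α_1 ∧ ⋯ ∧ ι_{n_m}(α_s) ∧ ⋯ ∧ α_k` over the unshuffles `σ` and the pairs `(s, m)` in
`S = σ{1, …, i}`. An unshuffle is determined by `S`, which can be any `i`-subset, so `T(s, m)` is
counted once for each `i`-subset containing `s` and `m`: `C(k-1, i-1)` times if `s = m` and
`C(k-2, i-2)` times otherwise. By the graded Leibniz rule,
`∑_{s,m} T(s, m) = ι_n(α_1 ∧ ⋯ ∧ α_k)`. -/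

set_option synthInstance.maxHeartbeats 1000000
set_option maxHeartbeats 1000000

open Module Finset

theorem List.prod_ofFn_update_sum {A : Type*} [Semiring A] {k : ℕ} (α : Fin k → A)
    (s : Fin k) {ι : Type*} (u : Finset ι) (g : ι → A) :
    (List.ofFn (Function.update α s (∑ t ∈ u, g t))).prod =
      ∑ t ∈ u, (List.ofFn (Function.update α s (g t))).prod :=
  (MultilinearMap.mkPiAlgebraFin ℕ k A).map_update_sum u s g α

namespace ExteriorAlgebra

open CliffordAlgebra

variable {R M : Type*} [CommRing R] [AddCommGroup M] [Module R M]

theorem contractLeft_mul_of_mem_exteriorPower (d : Module.Dual R M) {p : ℕ}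
    {x : ExteriorAlgebra R M} (hx : x ∈ ⋀[R]^p M) (y : ExteriorAlgebra R M) :
    contractLeft d (x * y) = contractLeft d x * y + (-1 : R) ^ p • (x * contractLeft d y) := by
  induction hx using Submodule.pow_induction_on_left' with
  | algebraMap _ =>
    simp [contractLeft_algebraMap_mul, contractLeft_algebraMap, Algebra.smul_def]
  | add _ _ _ _ _ iha ihb =>
    simp only [add_mul, map_add, iha, ihb, smul_add]
    abel
  | mem_mul _ hv _ _ _ ih =>
    obtain ⟨m, rfl⟩ := hv
    rw [mul_assoc, contractLeft_ι_mul, contractLeft_ι_mul, ih, mul_add, pow_succ]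
    simp only [mul_smul_comm, smul_mul_assoc, mul_assoc, mul_neg_one, neg_smul, sub_mul]
    abel

theorem contractLeft_list_ofFn_prod (d : Module.Dual R M) {k : ℕ} (deg : Fin k → ℕ)
    (x : Fin k → ExteriorAlgebra R M) (hx : ∀ t, x t ∈ ⋀[R]^(deg t) M) :
    contractLeft d (List.ofFn x).prod =
      ∑ ℓ, (-1 : R) ^ (∑ q ∈ univ.filter (· < ℓ), deg q) •
        (List.ofFn (Function.update x ℓ (contractLeft d (x ℓ)))).prod := by
  induction x using Fin.consInduction with
  | elim0 => simp [contractLeft_one]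
  | cons x₀ x ih =>
    have hdeg (ℓ : Fin _) : ∑ q ∈ univ.filter (· < ℓ.succ), deg q
        = deg 0 + ∑ q ∈ univ.filter (· < ℓ), deg q.succ := by
      simp only [sum_filter, Fin.sum_univ_succ, Fin.succ_pos, Fin.succ_lt_succ_iff, if_true]
    simp only [List.ofFn_cons, List.prod_cons, Fin.sum_univ_succ, ← Fin.cons_update,
      Fin.update_cons_zero, hdeg, Fin.cons_zero, Fin.cons_succ]
    rw [contractLeft_mul_of_mem_exteriorPower d (by simpa using hx 0),
      ih (fun q => deg q.succ) (fun q => by simpa using hx q.succ)]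
    simp [pow_add, mul_smul, mul_sum, smul_sum]

end ExteriorAlgebra

namespace Finset

variable {α β : Type*} [DecidableEq α] [Fintype α]

theorem card_filter_powersetCard_mem_and_mem {i : ℕ} (hi : 1 ≤ i) (s m : α) :
    #{S ∈ powersetCard i univ | s ∈ S ∧ m ∈ S} =
      if s = m then (Fintype.card α - 1).choose (i - 1)
      else if 2 ≤ i then (Fintype.card α - 2).choose (i - 2) else 0 := by
  have hpair : ∀ S : Finset α, s ∈ S ∧ m ∈ S ↔ {s, m} ⊆ S := by
    simp [insert_subset_iff]
  simp_rw [hpair]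
  split_ifs with hsm h2
  · subst hsm
    simpa using card_filter_powersetCard_subset {s} univ i (subset_univ _) (by simpa using hi)
  · have hcard : #{s, m} = 2 := card_pair hsm
    simpa [hcard] using
      card_filter_powersetCard_subset {s, m} univ i (subset_univ _) (by omega)
  · refine card_eq_zero.2 (filter_eq_empty_iff.2 fun S hS hsub => h2 ?_)
    rw [← mem_powersetCard_univ.1 hS, ← card_pair hsm]
    exact card_le_card hsub

theorem sum_sum_sum_mem_eq_sum_sum_card_nsmul [AddCommMonoid β] (𝒜 : Finset (Finset α))
    (F : α → α → β) :
    ∑ S ∈ 𝒜, ∑ s ∈ S, ∑ m ∈ S, F s m = ∑ s, ∑ m, #{S ∈ 𝒜 | s ∈ S ∧ m ∈ S} • F s m := by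
  have hindicator (S : Finset α) : ∑ s ∈ S, ∑ m ∈ S, F s m =
      ∑ s, ∑ m, if s ∈ S ∧ m ∈ S then F s m else 0 := by
    simp [ite_and]
  simp_rw [hindicator]
  rw [sum_comm]
  refine sum_congr rfl fun s _ => ?_
  rw [sum_comm]
  simp_rw [← sum_filter, sum_const]

end Finset

section Unshuffle

variable {k i : ℕ}

def firstBlock (k i : ℕ) : Finset (Fin k) := univ.filter fun ℓ : Fin k => (ℓ : ℕ) < i

def unshuffles (k i : ℕ) : Finset (Equiv.Perm (Fin k)) :=
  univ.filter fun σ => (∀ a b : Fin k, a < b → (b : ℕ) < i → σ a < σ b) ∧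
    (∀ a b : Fin k, a < b → i ≤ (a : ℕ) → σ a < σ b)

theorem card_firstBlock (hik : i ≤ k) : #(firstBlock k i) = i := by
  rw [firstBlock, Fin.card_filter_val_lt, min_eq_right hik]

theorem card_compl_eq_sub {S : Finset (Fin k)} (hS : #S = i) : #Sᶜ = k - i := by
  rw [card_compl, Fintype.card_fin, hS]

noncomputable def unshuffleOf (S : Finset (Fin k)) (hS : #S = i) : Equiv.Perm (Fin k) :=
  (finCongr (Nat.add_sub_of_le (hS ▸ card_finset_fin_le S)).symm).trans <|
    finSumFinEquiv.symm.trans <|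
      (Equiv.sumCongr (S.orderIsoOfFin hS).toEquiv
        ((Sᶜ.orderIsoOfFin (card_compl_eq_sub hS)).toEquiv.trans
          (Equiv.subtypeEquivRight fun _ => mem_compl))).trans (Equiv.sumCompl (· ∈ S))

theorem unshuffleOf_apply_of_lt {S : Finset (Fin k)} (hS : #S = i) {ℓ : Fin k}
    (hℓ : (ℓ : ℕ) < i) : unshuffleOf S hS ℓ = S.orderEmbOfFin hS ⟨ℓ, hℓ⟩ := by
  have hik : i ≤ k := hS ▸ card_finset_fin_le S
  rw [unshuffleOf, Equiv.trans_apply, finCongr_apply,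
    show Fin.cast (by omega : k = i + (k - i)) ℓ = Fin.castAdd (k - i) ⟨ℓ, hℓ⟩ from rfl,
    Equiv.trans_apply, finSumFinEquiv_symm_apply_castAdd]
  simp

theorem unshuffleOf_apply_of_le {S : Finset (Fin k)} (hS : #S = i) {ℓ : Fin k}
    (hℓ : i ≤ (ℓ : ℕ)) :
    unshuffleOf S hS ℓ = Sᶜ.orderEmbOfFin (card_compl_eq_sub hS) ⟨ℓ - i, by omega⟩ := by
  rw [unshuffleOf, Equiv.trans_apply, finCongr_apply,
    show Fin.cast (by omega : k = i + (k - i)) ℓ = Fin.natAdd i ⟨ℓ - i, by omega⟩ from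
      Fin.ext (by simp; omega), Equiv.trans_apply, finSumFinEquiv_symm_apply_natAdd]
  simp

theorem unshuffleOf_mem_unshuffles {S : Finset (Fin k)} (hS : #S = i) :
    unshuffleOf S hS ∈ unshuffles k i := by
  refine mem_filter.2 ⟨mem_univ _, fun a b hab hb => ?_, fun a b hab ha => ?_⟩
  · rw [unshuffleOf_apply_of_lt hS (Nat.lt_trans hab hb), unshuffleOf_apply_of_lt hS hb]
    exact (S.orderEmbOfFin hS).strictMono hab
  · rw [unshuffleOf_apply_of_le hS ha, unshuffleOf_apply_of_le hS (ha.trans hab.le)]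
    exact (Sᶜ.orderEmbOfFin _).strictMono (Fin.mk_lt_mk.2 (by omega))

theorem image_firstBlock_unshuffleOf {S : Finset (Fin k)} (hS : #S = i) :
    (firstBlock k i).image (unshuffleOf S hS) = S := by
  have hik : i ≤ k := hS ▸ card_finset_fin_le S
  refine eq_of_subset_of_card_le (fun x hx => ?_) ?_
  · obtain ⟨ℓ, hℓ, rfl⟩ := mem_image.1 hx
    rw [unshuffleOf_apply_of_lt hS (mem_filter.1 hℓ).2]
    exact S.orderEmbOfFin_mem hS _
  · rw [card_image_of_injective _ (Equiv.injective _), card_firstBlock hik, hS]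

theorem card_image_firstBlock (hik : i ≤ k) (σ : Equiv.Perm (Fin k)) :
    #((firstBlock k i).image σ) = i := by
  rw [card_image_of_injective _ σ.injective, card_firstBlock hik]

theorem unshuffleOf_image_firstBlock (hik : i ≤ k) {σ : Equiv.Perm (Fin k)}
    (hσ : σ ∈ unshuffles k i) :
    unshuffleOf ((firstBlock k i).image σ) (card_image_firstBlock hik σ) = σ := by
  obtain ⟨hlow, hhigh⟩ := (mem_filter.1 hσ).2
  set S := (firstBlock k i).image σ
  have hS : #S = i := card_image_firstBlock hik σ
  have hlow_eq : (fun x : Fin i => σ (Fin.castLE hik x)) = S.orderEmbOfFin hS :=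
    orderEmbOfFin_unique hS (fun x => mem_image_of_mem σ (mem_filter.2 ⟨mem_univ _, x.isLt⟩))
      fun x y hxy => hlow _ _ hxy y.isLt
  have hhigh_eq : (fun x : Fin (k - i) => σ ⟨i + x, by omega⟩) =
      Sᶜ.orderEmbOfFin (card_compl_eq_sub hS) := by
    refine orderEmbOfFin_unique _ (fun x => mem_compl.2 fun hx => ?_)
      fun x y hxy => hhigh _ _ (Fin.mk_lt_mk.2 (by simpa using hxy)) (Nat.le_add_right _ _)
    obtain ⟨ℓ, hℓ, hσℓ⟩ := mem_image.1 hx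
    have hval : (ℓ : ℕ) = i + x := congrArg Fin.val (σ.injective hσℓ)
    have hlt : (ℓ : ℕ) < i := (mem_filter.1 hℓ).2
    omega
  ext ℓ
  rcases lt_or_ge (ℓ : ℕ) i with hℓ | hℓ
  · rw [unshuffleOf_apply_of_lt hS hℓ, ← hlow_eq]
    rfl
  · rw [unshuffleOf_apply_of_le hS hℓ, ← hhigh_eq]
    simp only [Nat.add_sub_cancel' hℓ]

theorem sum_unshuffles_eq_sum_powersetCard {β : Type*} [AddCommMonoid β] (hik : i ≤ k)
    (G : Finset (Fin k) → β) :
    ∑ σ ∈ unshuffles k i, G ((firstBlock k i).image σ) = ∑ S ∈ powersetCard i univ, G S :=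
  sum_bij' (fun σ _ => (firstBlock k i).image σ)
    (fun S hS => unshuffleOf S (mem_powersetCard_univ.1 hS))
    (fun σ _ => mem_powersetCard_univ.2 (card_image_firstBlock hik σ))
    (fun _ _ => unshuffleOf_mem_unshuffles _)
    (fun _ hσ => unshuffleOf_image_firstBlock hik hσ)
    (fun _ _ => image_firstBlock_unshuffleOf _)
    (fun _ _ => rfl)

theorem sum_unshuffles_sum_firstBlock_sum_firstBlock {β : Type*} [AddCommGroup β]
    (hi : 1 ≤ i) (hik : i ≤ k) (G : Fin k → Fin k → β) :
    ∑ σ ∈ unshuffles k i, ∑ ℓ ∈ firstBlock k i, ∑ t ∈ firstBlock k i, G (σ ℓ) (σ t) =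
      (if 2 ≤ i then ((k - 2).choose (i - 2) : ℤ) else 0) • ∑ s, ∑ m, G s m +
      (((k - 1).choose (i - 1) : ℤ) - (if 2 ≤ i then ((k - 2).choose (i - 2) : ℤ) else 0)) •
        ∑ s, G s s := by
  set c₂ : ℤ := if 2 ≤ i then ((k - 2).choose (i - 2) : ℤ) else 0
  have hcoeff (s m : Fin k) : (#{S ∈ powersetCard i univ | s ∈ S ∧ m ∈ S} : ℤ) =
      c₂ + if s = m then ((k - 1).choose (i - 1) : ℤ) - c₂ else 0 := by
    rw [card_filter_powersetCard_mem_and_mem hi, Fintype.card_fin]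
    split_ifs <;> simp_all [c₂]
  have himage (σ : Equiv.Perm (Fin k)) :
      ∑ ℓ ∈ firstBlock k i, ∑ t ∈ firstBlock k i, G (σ ℓ) (σ t) =
        ∑ s ∈ (firstBlock k i).image σ, ∑ m ∈ (firstBlock k i).image σ, G s m := by
    simp only [sum_image fun _ _ _ _ h => σ.injective h]
  simp_rw [himage]
  rw [sum_unshuffles_eq_sum_powersetCard hik fun S => ∑ s ∈ S, ∑ m ∈ S, G s m,
    sum_sum_sum_mem_eq_sum_sum_card_nsmul]
  simp_rw [← Nat.cast_smul_eq_nsmul ℤ, hcoeff, add_smul, sum_add_distrib, ite_smul, zero_smul,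
    sum_ite_eq, mem_univ, if_true, smul_sum]

end Unshuffle


theorem ctr_sum {N : Type} [AddCommGroup N] {ι : Type*} (u : Finset ι) (f : ι → N)
    (x : ExteriorAlgebra ℤ (Module.Dual ℤ N)) :
    ctr (∑ t ∈ u, f t) x = ∑ t ∈ u, ctr (f t) x := by
  simp [ctr, map_sum, LinearMap.sum_apply]

theorem unshuffle_counting_general (N : Type) [AddCommGroup N]
    (k : ℕ) (i : ℕ) (hi : 1 ≤ i) (hik : i ≤ k)
    (n : Fin k → N) (d : Fin k → ℕ)
    (α : Fin k → ExteriorAlgebra ℤ (Module.Dual ℤ N))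
    (hα : ∀ t, α t ∈ ⋀[ℤ]^(d t) (Module.Dual ℤ N)) :
    (∑ σ ∈ Finset.univ.filter (fun σ : Equiv.Perm (Fin k) =>
        (∀ a b : Fin k, a < b → (b : ℕ) < i → σ a < σ b) ∧
        (∀ a b : Fin k, a < b → i ≤ (a : ℕ) → σ a < σ b)),
      ∑ ℓ ∈ Finset.univ.filter (fun ℓ : Fin k => (ℓ : ℕ) < i),
        ((-1 : ℤ) ^ (∑ q ∈ Finset.univ.filter (fun q : Fin k => q < σ ℓ), d q)) •
          (List.ofFn (Function.update α (σ ℓ)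
            (ctr (∑ t ∈ Finset.univ.filter (fun t : Fin k => (t : ℕ) < i), n (σ t))
              (α (σ ℓ))))).prod) =
    (if 2 ≤ i then ((k - 2).choose (i - 2) : ℤ) else 0) •
        ctr (∑ t, n t) (List.ofFn α).prod +
      (((k - 1).choose (i - 1) : ℤ) -
          (if 2 ≤ i then ((k - 2).choose (i - 2) : ℤ) else 0)) •
        ∑ ℓ : Fin k, ((-1 : ℤ) ^ (∑ q ∈ Finset.univ.filter (fun q : Fin k => q < ℓ), d q)) •
          (List.ofFn (Function.update α ℓ (ctr (n ℓ) (α ℓ)))).prod := by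
  conv_lhs => simp only [ctr_sum, List.prod_ofFn_update_sum, smul_sum]
  refine (sum_unshuffles_sum_firstBlock_sum_firstBlock hi hik fun s m =>
    ((-1 : ℤ) ^ (∑ q ∈ univ.filter (· < s), d q)) •
      (List.ofFn (Function.update α s (ctr (n m) (α s)))).prod).trans ?_
  rw [ctr_sum, sum_comm]
  congr 2
  exact sum_congr rfl fun m _ =>
    (ExteriorAlgebra.contractLeft_list_ofFn_prod (Module.Dual.eval ℤ N (n m)) d α hα).symm

/-- **The unshuffle-counting identity** (the combinatorial core of the proof of Theorem
`Linfinity`).  Fix `k ≥ 1`, `n_1,…,n_k ∈ N`, homogeneous `α_t ∈ Λ^{d t} M`, `1 ≤ i ≤ k`,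
`j = k+1−i`, `n := Σ n_t`, and for an `(i,j)`-unshuffle `σ` set `n_σ := Σ_{t≤i} n_{σ(t)}`.
Then
`Σ_{σ∈UnShuff(i,j)} Σ_{ℓ=1}^{i} (−1)^{deg α_1+⋯+deg α_{σ(ℓ)−1}}
    α_1∧⋯∧ι_{n_σ}(α_{σ(ℓ)})∧⋯∧α_k
 = C(k−2, i−2) ι_n(α_1∧⋯∧α_k)
   + (C(k−1, i−1) − C(k−2, i−2)) Σ_{ℓ=1}^{k} (−1)^{deg α_1+⋯+deg α_{ℓ−1}}
       α_1∧⋯∧ι_{n_ℓ}(α_ℓ)∧⋯∧α_k`,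
with the convention `C(a, b) = 0` for `b < 0` (relevant when `i = 1`) or `b > a`. -/
theorem unshuffle_counting (N : Type) [AddCommGroup N] [Module.Free ℤ N] [Module.Finite ℤ N]
    (k : ℕ) (hk : 1 ≤ k) (i j : ℕ) (hi : 1 ≤ i) (hik : i ≤ k) (hj : j = k + 1 - i)
    (n : Fin k → N) (d : Fin k → ℕ)
    (α : Fin k → ExteriorAlgebra ℤ (Module.Dual ℤ N))
    (hα : ∀ t, α t ∈ ⋀[ℤ]^(d t) (Module.Dual ℤ N)) :
    (∑ σ ∈ Finset.univ.filter (fun σ : Equiv.Perm (Fin k) =>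
        (∀ a b : Fin k, a < b → (b : ℕ) < i → σ a < σ b) ∧
        (∀ a b : Fin k, a < b → i ≤ (a : ℕ) → σ a < σ b)),
      ∑ ℓ ∈ Finset.univ.filter (fun ℓ : Fin k => (ℓ : ℕ) < i),
        ((-1 : ℤ) ^ (∑ q ∈ Finset.univ.filter (fun q : Fin k => q < σ ℓ), d q)) •
          (List.ofFn (Function.update α (σ ℓ)
            (ctr (∑ t ∈ Finset.univ.filter (fun t : Fin k => (t : ℕ) < i), n (σ t))
              (α (σ ℓ))))).prod) =
    (if 2 ≤ i then ((k - 2).choose (i - 2) : ℤ) else 0) •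
        ctr (∑ t, n t) (List.ofFn α).prod +
      (((k - 1).choose (i - 1) : ℤ) -
          (if 2 ≤ i then ((k - 2).choose (i - 2) : ℤ) else 0)) •
        ∑ ℓ : Fin k, ((-1 : ℤ) ^ (∑ q ∈ Finset.univ.filter (fun q : Fin k => q < ℓ), d q)) •
          (List.ofFn (Function.update α ℓ (ctr (n ℓ) (α ℓ)))).prod :=
  unshuffle_counting_general N k i hi hik n d α hα
end
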